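/- Assume given τ^r and partial sums T^s_i as in the conversion (τ^1_{ij} = −ω_{ij}, τ^2 = 0, and all y-derivatives of {T^s_i, T^s_j} of order ≤ s−1 vanish at y = 0 for every s ≥ 1). Let a_0, b_0 : U → ℝ be smooth and let (a^r_{j_1…j_r}) and (b^r_{j_1…j_r}) be the unique families with a^s := a_0 + Σ_{r=1}^s a^r_{j_1…j_r} y^{j_1}⋯y^{j_r} and b^s likewise satisfying the invariance conditions (all y-derivatives of {T^s_i, a^s} and {T^s_i, b^s} of order ≤ s−1 vanish at y = 0). Then the first-order coefficients satisfy a^1_i = ∂a_0/∂x^i and b^1_i = ∂b_0/∂x^i, and consequently the y-independent term of the bracket of the extensions equals the Poisson bracket on the base: ω^{ij}(x) a^1_i(x) b^1_j(x) = ω^{ij}(x) (∂a_0/∂x^i)(∂b_0/∂x^j), i.e. {a,b}|_{y=0} = {a_0, b_0}_M. -/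

import Mathlib

/-!
Context: as in the Abelian conversion: symmetric symplectic connection `Γ` for
`ω` on open `U ⊆ ℝ^N`, extended bracket on functions of `(x,p,y)`, symplectic
potential `ρ`, conversion coefficients `τ` (`τ^1 = −ω`, `τ^2 = 0`), and the
unique BRST-invariant extensions `a`, `b` of smooth `a_0`, `b_0 : U → ℝ`.

STATEMENT 10: the first-order coefficients of the extensions are
`a^1_i = ∂a_0/∂x^i`, `b^1_i = ∂b_0/∂x^i`, and consequently
`ω^{ij} a^1_i b^1_j = ω^{ij} ∂_i a_0 ∂_j b_0`, i.e. `{a,b}|_{y=0} = {a_0,b_0}_M`.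
-/

open scoped BigOperators

/-- Partial derivative `∂f/∂x^i` of a function on `ℝ^N`. -/
noncomputable def pd {N : ℕ} (i : Fin N) (f : (Fin N → ℝ) → ℝ) : (Fin N → ℝ) → ℝ :=
  fun x => fderiv ℝ f x (Pi.single i 1)

/-- The curvature `R^k_{l;ij}` of the connection `Γ` (with `Γ k i j = Γ^k_{ij}`). -/
noncomputable def Rup {N : ℕ} (Γ : Fin N → Fin N → Fin N → (Fin N → ℝ) → ℝ)
    (k l i j : Fin N) : (Fin N → ℝ) → ℝ :=
  fun x => pd i (Γ k j l) x + (∑ n, Γ n j l x * Γ k i n x)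
    - pd j (Γ k i l) x - (∑ n, Γ n i l x * Γ k j n x)

/-- The lowered curvature `R_{kl;ij} = ω_{kn} R^n_{l;ij}`. -/
noncomputable def Rlow {N : ℕ} (ω : Fin N → Fin N → (Fin N → ℝ) → ℝ)
    (Γ : Fin N → Fin N → Fin N → (Fin N → ℝ) → ℝ) (k l i j : Fin N) :
    (Fin N → ℝ) → ℝ :=
  fun x => ∑ n, ω k n x * Rup Γ n l i j x

/-- The extended phase space `ℝ^N × ℝ^N × ℝ^N`, points `z = (x, p, y)`. -/
abbrev Phase (N : ℕ) := (Fin N → ℝ) × (Fin N → ℝ) × (Fin N → ℝ)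

/-- `∂f/∂x^i` on the extended phase space. -/
noncomputable def pdx {N : ℕ} (i : Fin N) (f : Phase N → ℝ) : Phase N → ℝ :=
  fun z => fderiv ℝ f z (Pi.single i 1, 0, 0)

/-- `∂f/∂p_i` on the extended phase space. -/
noncomputable def pdp {N : ℕ} (i : Fin N) (f : Phase N → ℝ) : Phase N → ℝ :=
  fun z => fderiv ℝ f z (0, Pi.single i 1, 0)

/-- `∂f/∂y^i` on the extended phase space. -/
noncomputable def pdy {N : ℕ} (i : Fin N) (f : Phase N → ℝ) : Phase N → ℝ :=
  fun z => fderiv ℝ f z (0, 0, Pi.single i 1)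

/-- The extended bracket of Eq. (17) of the paper. -/
noncomputable def extPB {N : ℕ} (ω ω' : Fin N → Fin N → (Fin N → ℝ) → ℝ)
    (Γ : Fin N → Fin N → Fin N → (Fin N → ℝ) → ℝ)
    (f g : Phase N → ℝ) : Phase N → ℝ :=
  fun z =>
    (∑ i, (pdx i f z * pdp i g z - pdp i f z * pdx i g z))
    + (∑ i, ∑ j, ω' i j z.1 * pdy i f z * pdy j g z)
    + (∑ i, ∑ j, ∑ l, Γ j i l z.1 * z.2.2 l *
        (pdp i f z * pdy j g z - pdy j f z * pdp i g z))
    + (1 / 2) * ∑ m, ∑ n, ∑ i, ∑ j,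
        Rlow ω Γ m n i j z.1 * z.2.2 m * z.2.2 n * pdp i f z * pdp j g z

/-- Iterated `y`-derivative along a list of directions. -/
noncomputable def itdyL {N : ℕ} : List (Fin N) → (Phase N → ℝ) → Phase N → ℝ
  | [], f => f
  | i :: L, f => pdy i (itdyL L f)

/-- The partial sum `T^s_i = ρ_i(x) − p_i + Σ_{r=1}^s τ^r_{i j_1…j_r}(x) y^{j_1}⋯y^{j_r}`. -/
noncomputable def Tpart {N : ℕ} (ρ : Fin N → (Fin N → ℝ) → ℝ)
    (τ : (r : ℕ) → Fin N → (Fin r → Fin N) → (Fin N → ℝ) → ℝ)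
    (s : ℕ) (i : Fin N) : Phase N → ℝ :=
  fun z => ρ i z.1 - z.2.1 i
    + ∑ r ∈ Finset.Icc 1 s, ∑ j : Fin r → Fin N, τ r i j z.1 * ∏ t, z.2.2 (j t)


/-- The partial sum `a^s = a_0(x) + Σ_{r=1}^s a^r_{j_1…j_r}(x) y^{j_1}⋯y^{j_r}`. -/
noncomputable def apart {N : ℕ} (a0 : (Fin N → ℝ) → ℝ)
    (a : (r : ℕ) → (Fin r → Fin N) → (Fin N → ℝ) → ℝ)
    (s : ℕ) : Phase N → ℝ :=
  fun z => a0 z.1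
    + ∑ r ∈ Finset.Icc 1 s, ∑ j : Fin r → Fin N, a r j z.1 * ∏ t, z.2.2 (j t)


section Aux

open ContinuousLinearMap in
/-- Derivative of the `s = 1` partial sum `T^1_i` at a point with `y = 0`. -/
lemma hasFDerivAt_T1 {N : ℕ} (U : Set (Fin N → ℝ)) (hU : IsOpen U)
    (ρ : Fin N → (Fin N → ℝ) → ℝ) (hρ : ∀ i, ContDiffOn ℝ (⊤ : ℕ∞) (ρ i) U)
    (τ1 : Fin N → (Fin 1 → Fin N) → (Fin N → ℝ) → ℝ)
    (hτ : ∀ i j, ContDiffOn ℝ (⊤ : ℕ∞) (τ1 i j) U)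
    (i : Fin N) (x : Fin N → ℝ) (hx : x ∈ U) (p : Fin N → ℝ) :
    HasFDerivAt (fun z : Phase N => ρ i z.1 - z.2.1 i + ∑ j : Fin 1 → Fin N, τ1 i j z.1 * z.2.2 (j 0))
      (((fderiv ℝ (ρ i) x).comp (fst ℝ (Fin N → ℝ) ((Fin N → ℝ) × (Fin N → ℝ)))
        - ((proj i).comp
            ((fst ℝ (Fin N → ℝ) (Fin N → ℝ)).comp
              (snd ℝ (Fin N → ℝ) ((Fin N → ℝ) × (Fin N → ℝ))))))
        + ∑ j : Fin 1 → Fin N,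
            (τ1 i j x • ((proj (j 0)).comp
              ((snd ℝ (Fin N → ℝ) (Fin N → ℝ)).comp
                (snd ℝ (Fin N → ℝ) ((Fin N → ℝ) × (Fin N → ℝ)))))
             + ((0:Fin N → ℝ) (j 0)) • ((fderiv ℝ (τ1 i j) x).comp
                (fst ℝ (Fin N → ℝ) ((Fin N → ℝ) × (Fin N → ℝ)))))
      ) (x, p, (0 : Fin N → ℝ)) := by
  have hρd : HasFDerivAt (ρ i) (fderiv ℝ (ρ i) x) x :=
    (((hρ i).contDiffAt (hU.mem_nhds hx)).differentiableAt (by simp)).hasFDerivAt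
  have h1 : HasFDerivAt (fun z : Phase N => ρ i z.1)
      ((fderiv ℝ (ρ i) x).comp (fst ℝ (Fin N → ℝ) ((Fin N → ℝ) × (Fin N → ℝ))))
      (x, p, (0 : Fin N → ℝ)) := hρd.comp _ (hasFDerivAt_fst)
  have h2 : HasFDerivAt (fun z : Phase N => z.2.1 i)
      ((proj i).comp
        ((fst ℝ (Fin N → ℝ) (Fin N → ℝ)).comp
          (snd ℝ (Fin N → ℝ) ((Fin N → ℝ) × (Fin N → ℝ)))))
      (x, p, (0 : Fin N → ℝ)) :=
    ContinuousLinearMap.hasFDerivAt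
      ((proj i).comp
        ((fst ℝ (Fin N → ℝ) (Fin N → ℝ)).comp
          (snd ℝ (Fin N → ℝ) ((Fin N → ℝ) × (Fin N → ℝ)))))
  refine (h1.sub h2).add (HasFDerivAt.fun_sum fun j _ => ?_)
  have hτd : HasFDerivAt (fun z : Phase N => τ1 i j z.1)
      ((fderiv ℝ (τ1 i j) x).comp (fst ℝ (Fin N → ℝ) ((Fin N → ℝ) × (Fin N → ℝ))))
      (x, p, (0 : Fin N → ℝ)) :=
    ((((hτ i j).contDiffAt (hU.mem_nhds hx)).differentiableAt (by simp)).hasFDerivAt).comp _ hasFDerivAt_fst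
  have hy : HasFDerivAt (fun z : Phase N => z.2.2 (j 0))
      ((proj (j 0)).comp
        ((snd ℝ (Fin N → ℝ) (Fin N → ℝ)).comp
          (snd ℝ (Fin N → ℝ) ((Fin N → ℝ) × (Fin N → ℝ)))))
      (x, p, (0 : Fin N → ℝ)) :=
    ContinuousLinearMap.hasFDerivAt
      ((proj (j 0)).comp
        ((snd ℝ (Fin N → ℝ) (Fin N → ℝ)).comp
          (snd ℝ (Fin N → ℝ) ((Fin N → ℝ) × (Fin N → ℝ)))))
  exact hτd.mul hy

open ContinuousLinearMap in
/-- Derivative of the `s = 1` partial extension `c^1` at a point with `y = 0`. -/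
lemma hasFDerivAt_A1 {N : ℕ} (U : Set (Fin N → ℝ)) (hU : IsOpen U)
    (c0 : (Fin N → ℝ) → ℝ) (hc0 : ContDiffOn ℝ (⊤ : ℕ∞) c0 U)
    (c1 : (Fin 1 → Fin N) → (Fin N → ℝ) → ℝ)
    (hc1 : ∀ j, ContDiffOn ℝ (⊤ : ℕ∞) (c1 j) U)
    (x : Fin N → ℝ) (hx : x ∈ U) (p : Fin N → ℝ) :
    HasFDerivAt (fun z : Phase N => c0 z.1 + ∑ j : Fin 1 → Fin N, c1 j z.1 * z.2.2 (j 0))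
      (((fderiv ℝ c0 x).comp (fst ℝ (Fin N → ℝ) ((Fin N → ℝ) × (Fin N → ℝ))))
        + ∑ j : Fin 1 → Fin N,
            (c1 j x • ((proj (j 0)).comp
              ((snd ℝ (Fin N → ℝ) (Fin N → ℝ)).comp
                (snd ℝ (Fin N → ℝ) ((Fin N → ℝ) × (Fin N → ℝ)))))
             + ((0:Fin N → ℝ) (j 0)) • ((fderiv ℝ (c1 j) x).comp
                (fst ℝ (Fin N → ℝ) ((Fin N → ℝ) × (Fin N → ℝ)))))
      ) (x, p, (0 : Fin N → ℝ)) := by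
  have h1 : HasFDerivAt (fun z : Phase N => c0 z.1)
      ((fderiv ℝ c0 x).comp (fst ℝ (Fin N → ℝ) ((Fin N → ℝ) × (Fin N → ℝ))))
      (x, p, (0 : Fin N → ℝ)) :=
    ((hc0.contDiffAt (hU.mem_nhds hx)).differentiableAt (by simp)).hasFDerivAt.comp _ hasFDerivAt_fst
  refine h1.add (HasFDerivAt.fun_sum fun j _ => ?_)
  have hcd : HasFDerivAt (fun z : Phase N => c1 j z.1)
      ((fderiv ℝ (c1 j) x).comp (fst ℝ (Fin N → ℝ) ((Fin N → ℝ) × (Fin N → ℝ))))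
      (x, p, (0 : Fin N → ℝ)) :=
    ((((hc1 j).contDiffAt (hU.mem_nhds hx)).differentiableAt (by simp)).hasFDerivAt).comp _ hasFDerivAt_fst
  have hy : HasFDerivAt (fun z : Phase N => z.2.2 (j 0))
      ((proj (j 0)).comp
        ((snd ℝ (Fin N → ℝ) (Fin N → ℝ)).comp
          (snd ℝ (Fin N → ℝ) ((Fin N → ℝ) × (Fin N → ℝ)))))
      (x, p, (0 : Fin N → ℝ)) :=
    ContinuousLinearMap.hasFDerivAt
      ((proj (j 0)).comp
        ((snd ℝ (Fin N → ℝ) (Fin N → ℝ)).comp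
          (snd ℝ (Fin N → ℝ) ((Fin N → ℝ) × (Fin N → ℝ)))))
  exact hcd.mul hy

/-- Value of the extended bracket `{T^1_i, c^1}` at `y = 0`. -/
lemma bracket_val {N : ℕ} (U : Set (Fin N → ℝ)) (hU : IsOpen U)
    (ω ω' : Fin N → Fin N → (Fin N → ℝ) → ℝ)
    (Γ : Fin N → Fin N → Fin N → (Fin N → ℝ) → ℝ)
    (ρ : Fin N → (Fin N → ℝ) → ℝ) (hρ : ∀ i, ContDiffOn ℝ (⊤ : ℕ∞) (ρ i) U)
    (τ : (r : ℕ) → Fin N → (Fin r → Fin N) → (Fin N → ℝ) → ℝ)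
    (hτ : ∀ i j, ContDiffOn ℝ (⊤ : ℕ∞) (τ 1 i j) U)
    (c0 : (Fin N → ℝ) → ℝ) (hc0 : ContDiffOn ℝ (⊤ : ℕ∞) c0 U)
    (c : (r : ℕ) → (Fin r → Fin N) → (Fin N → ℝ) → ℝ)
    (hc : ∀ j, ContDiffOn ℝ (⊤ : ℕ∞) (c 1 j) U)
    (i : Fin N) (x : Fin N → ℝ) (hx : x ∈ U) (p : Fin N → ℝ) :
    extPB ω ω' Γ (Tpart ρ τ 1 i) (apart c0 c 1) (x, p, (0 : Fin N → ℝ))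
      = pd i c0 x
        + ∑ k, ∑ l, ω' k l x * τ 1 i (fun _ => k) x * c 1 (fun _ => l) x := by
  have hTeq : Tpart ρ τ 1 i
      = fun z : Phase N => ρ i z.1 - z.2.1 i + ∑ j : Fin 1 → Fin N, τ 1 i j z.1 * z.2.2 (j 0) := by
    funext z
    simp [Tpart, Finset.Icc_self]
  have hAeq : apart c0 c 1
      = fun z : Phase N => c0 z.1 + ∑ j : Fin 1 → Fin N, c 1 j z.1 * z.2.2 (j 0) := by
    funext z
    simp [apart, Finset.Icc_self]
  have hT := hasFDerivAt_T1 U hU ρ hρ (fun i j => τ 1 i j) hτ i x hx p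
  have hA := hasFDerivAt_A1 U hU c0 hc0 (fun j => c 1 j) hc x hx p
  rw [← hTeq] at hT
  rw [← hAeq] at hA
  have hfdT := hT.fderiv
  have hfdA := hA.fderiv
  have hTx : ∀ k, pdx k (Tpart ρ τ 1 i) (x, p, (0 : Fin N → ℝ)) = fderiv ℝ (ρ i) x (Pi.single k 1) := by
    intro k
    simp [pdx, hfdT]
  have hTp : ∀ k, pdp k (Tpart ρ τ 1 i) (x, p, (0 : Fin N → ℝ)) = -((Pi.single k 1 : Fin N → ℝ) i) := by
    intro k
    simp [pdp, hfdT]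
  have hTy : ∀ k, pdy k (Tpart ρ τ 1 i) (x, p, (0 : Fin N → ℝ)) = τ 1 i (fun _ => k) x := by
    intro k
    simp only [pdy, hfdT]
    simp only [ContinuousLinearMap.add_apply, ContinuousLinearMap.sub_apply,
      ContinuousLinearMap.coe_comp', Function.comp_apply, ContinuousLinearMap.coe_fst',
      ContinuousLinearMap.coe_snd', ContinuousLinearMap.proj_apply,
      ContinuousLinearMap.sum_apply, ContinuousLinearMap.smul_apply, Pi.zero_apply,
      zero_smul, add_zero, smul_eq_mul, map_zero, zero_sub, neg_zero, zero_add]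
    rw [Finset.sum_eq_single (fun _ => k : Fin 1 → Fin N)]
    · simp
    · intro j _ hj
      have hjk : j 0 ≠ k := by
        intro h
        exact hj (funext fun t => by rw [Subsingleton.elim t 0, h])
      simp [Pi.single_eq_of_ne hjk]
    · simp
  have hAx : ∀ k, pdx k (apart c0 c 1) (x, p, (0 : Fin N → ℝ)) = pd k c0 x := by
    intro k
    simp [pdx, pd, hfdA]
  have hAp : ∀ k, pdp k (apart c0 c 1) (x, p, (0 : Fin N → ℝ)) = 0 := by
    intro k
    simp [pdp, hfdA]
  have hAy : ∀ k, pdy k (apart c0 c 1) (x, p, (0 : Fin N → ℝ)) = c 1 (fun _ => k) x := by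
    intro k
    simp only [pdy, hfdA]
    simp only [ContinuousLinearMap.add_apply, ContinuousLinearMap.coe_comp',
      Function.comp_apply, ContinuousLinearMap.coe_fst', ContinuousLinearMap.coe_snd',
      ContinuousLinearMap.proj_apply, ContinuousLinearMap.sum_apply,
      ContinuousLinearMap.smul_apply, Pi.zero_apply, zero_smul, add_zero, smul_eq_mul,
      map_zero, zero_add]
    rw [Finset.sum_eq_single (fun _ => k : Fin 1 → Fin N)]
    · simp
    · intro j _ hj
      have hjk : j 0 ≠ k := by
        intro h
        exact hj (funext fun t => by rw [Subsingleton.elim t 0, h])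
      simp [Pi.single_eq_of_ne hjk]
    · simp
  simp only [extPB, hTx, hTp, hTy, hAx, hAp, hAy]
  simp only [Pi.zero_apply, mul_zero, zero_mul, sub_zero, zero_sub, neg_mul, neg_neg,
    Finset.sum_const_zero, add_zero, mul_one, one_mul]
  have h1 : ∑ k, (Pi.single k 1 : Fin N → ℝ) i * pd k c0 x = pd i c0 x := by
    rw [Finset.sum_eq_single i]
    · simp
    · intro k _ hk
      simp [Pi.single_eq_of_ne (Ne.symm hk)]
    · simp
  rw [h1]

end Aux

theorem first_class_extension_reproduces_base_poisson_bracket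
    (N : ℕ) (hN : 1 ≤ N) (U : Set (Fin N → ℝ)) (hU : IsOpen U)
    (ω ω' : Fin N → Fin N → (Fin N → ℝ) → ℝ)
    (Γ : Fin N → Fin N → Fin N → (Fin N → ℝ) → ℝ)
    (hω_smooth : ∀ i j, ContDiffOn ℝ (⊤ : ℕ∞) (ω i j) U)
    (hω_anti : ∀ i j x, ω i j x = - ω j i x)
    (hω_inv : ∀ i k, ∀ x ∈ U, (∑ j, ω' i j x * ω j k x) = if i = k then (1:ℝ) else 0)
    (hΓ_smooth : ∀ k i j, ContDiffOn ℝ (⊤ : ℕ∞) (Γ k i j) U)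
    (hΓ_symm : ∀ k i j x, Γ k i j x = Γ k j i x)
    (hcompat : ∀ i j k, ∀ x ∈ U,
      pd i (ω j k) x - (∑ l, Γ l i j x * ω l k x) - (∑ l, Γ l i k x * ω j l x) = 0)
    (ρ : Fin N → (Fin N → ℝ) → ℝ)
    (hρ_smooth : ∀ i, ContDiffOn ℝ (⊤ : ℕ∞) (ρ i) U)
    (hρ_pot : ∀ i j, ∀ x ∈ U, ω i j x = pd i (ρ j) x - pd j (ρ i) x)
    -- the conversion data
    (τ : (r : ℕ) → Fin N → (Fin r → Fin N) → (Fin N → ℝ) → ℝ)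
    (hτ_smooth : ∀ r i j, ContDiffOn ℝ (⊤ : ℕ∞) (τ r i j) U)
    (hτ_symm : ∀ (r : ℕ) (i : Fin N) (j : Fin r → Fin N) (σ : Equiv.Perm (Fin r)),
      τ r i (j ∘ σ) = τ r i j)
    (hτ1 : ∀ (i : Fin N) (j : Fin 1 → Fin N) x, τ 1 i j x = - ω i (j 0) x)
    (hτ2 : ∀ (i : Fin N) (j : Fin 2 → Fin N) x, τ 2 i j x = 0)
    (hτ_abelian : ∀ s, 1 ≤ s → ∀ i j : Fin N, ∀ L : List (Fin N),
      L.length ≤ s - 1 → ∀ x ∈ U, ∀ p : Fin N → ℝ,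
        itdyL L (extPB ω ω' Γ (Tpart ρ τ s i) (Tpart ρ τ s j)) (x, p, 0) = 0)
    -- the two observables and their BRST-invariant extensions
    (a0 b0 : (Fin N → ℝ) → ℝ)
    (ha0 : ContDiffOn ℝ (⊤ : ℕ∞) a0 U) (hb0 : ContDiffOn ℝ (⊤ : ℕ∞) b0 U)
    (a b : (r : ℕ) → (Fin r → Fin N) → (Fin N → ℝ) → ℝ)
    (ha_smooth : ∀ r j, ContDiffOn ℝ (⊤ : ℕ∞) (a r j) U)
    (ha_symm : ∀ (r : ℕ) (j : Fin r → Fin N) (σ : Equiv.Perm (Fin r)), a r (j ∘ σ) = a r j)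
    (ha_inv : ∀ s, 1 ≤ s → ∀ i : Fin N, ∀ L : List (Fin N), L.length ≤ s - 1 →
      ∀ x ∈ U, ∀ p : Fin N → ℝ,
        itdyL L (extPB ω ω' Γ (Tpart ρ τ s i) (apart a0 a s)) (x, p, 0) = 0)
    (hb_smooth : ∀ r j, ContDiffOn ℝ (⊤ : ℕ∞) (b r j) U)
    (hb_symm : ∀ (r : ℕ) (j : Fin r → Fin N) (σ : Equiv.Perm (Fin r)), b r (j ∘ σ) = b r j)
    (hb_inv : ∀ s, 1 ≤ s → ∀ i : Fin N, ∀ L : List (Fin N), L.length ≤ s - 1 →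
      ∀ x ∈ U, ∀ p : Fin N → ℝ,
        itdyL L (extPB ω ω' Γ (Tpart ρ τ s i) (apart b0 b s)) (x, p, 0) = 0) :
    (∀ i : Fin N, ∀ x ∈ U, a 1 (fun _ => i) x = pd i a0 x) ∧
    (∀ i : Fin N, ∀ x ∈ U, b 1 (fun _ => i) x = pd i b0 x) ∧
    (∀ x ∈ U,
      (∑ i, ∑ j, ω' i j x * a 1 (fun _ => i) x * b 1 (fun _ => j) x) =
      (∑ i, ∑ j, ω' i j x * pd i a0 x * pd j b0 x)) := by
  
  have hinv' : ∀ x ∈ U, ∀ i l : Fin N, (∑ k, ω i k x * ω' k l x) = if i = l then (1:ℝ) else 0 := by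
    intro x hx i l
    have hAB : (Matrix.of fun i j => ω' i j x) * (Matrix.of fun i j => ω i j x) = 1 := by
      ext i k
      simpa [Matrix.mul_apply, Matrix.one_apply] using hω_inv i k x hx
    have hBA := mul_eq_one_comm.mp hAB
    have h := congrFun (congrFun hBA i) l
    simpa [Matrix.mul_apply, Matrix.one_apply] using h
  have key : ∀ (c0 : (Fin N → ℝ) → ℝ), ContDiffOn ℝ (⊤ : ℕ∞) c0 U →
      ∀ (c : (r : ℕ) → (Fin r → Fin N) → (Fin N → ℝ) → ℝ),
      (∀ r j, ContDiffOn ℝ (⊤ : ℕ∞) (c r j) U) →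
      (∀ s, 1 ≤ s → ∀ i : Fin N, ∀ L : List (Fin N), L.length ≤ s - 1 →
        ∀ x ∈ U, ∀ p : Fin N → ℝ,
          itdyL L (extPB ω ω' Γ (Tpart ρ τ s i) (apart c0 c s)) (x, p, 0) = 0) →
      ∀ i : Fin N, ∀ x ∈ U, c 1 (fun _ => i) x = pd i c0 x := by
    intro c0 hc0 c hc hcinv i x hx
    have h0 := hcinv 1 le_rfl i [] (by simp) x hx 0
    rw [show itdyL ([] : List (Fin N)) (extPB ω ω' Γ (Tpart ρ τ 1 i) (apart c0 c 1))
        = extPB ω ω' Γ (Tpart ρ τ 1 i) (apart c0 c 1) from rfl] at h0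
    rw [bracket_val U hU ω ω' Γ ρ hρ_smooth τ (fun i j => hτ_smooth 1 i j)
        c0 hc0 c (fun j => hc 1 j) i x hx 0] at h0
    have h2 : ∑ k, ∑ l, ω' k l x * τ 1 i (fun _ => k) x * c 1 (fun _ => l) x
        = -(c 1 (fun _ => i) x) := by
      have hst : ∀ k l : Fin N, ω' k l x * τ 1 i (fun _ => k) x * c 1 (fun _ => l) x
          = -(ω i k x * ω' k l x * c 1 (fun _ => l) x) := by
        intro k l
        rw [hτ1 i (fun _ => k) x]
        ring
      calc ∑ k, ∑ l, ω' k l x * τ 1 i (fun _ => k) x * c 1 (fun _ => l) x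
          = ∑ l, ∑ k, -(ω i k x * ω' k l x * c 1 (fun _ => l) x) := by
            rw [Finset.sum_comm]
            exact Finset.sum_congr rfl fun l _ => Finset.sum_congr rfl fun k _ => hst k l
        _ = ∑ l, -((∑ k, ω i k x * ω' k l x) * c 1 (fun _ => l) x) := by
            refine Finset.sum_congr rfl fun l _ => ?_
            rw [Finset.sum_mul, ← Finset.sum_neg_distrib]
        _ = -(c 1 (fun _ => i) x) := by
            simp only [hinv' x hx, ite_mul, one_mul, zero_mul]
            simp [Finset.sum_ite_eq]
    rw [h2] at h0
    linarith
  exact ⟨key a0 ha0 a ha_smooth ha_inv, key b0 hb0 b hb_smooth hb_inv,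
    fun x hx => Finset.sum_congr rfl fun i _ => Finset.sum_congr rfl fun j _ => by
      rw [key a0 ha0 a ha_smooth ha_inv i x hx, key b0 hb0 b hb_smooth hb_inv j x hx]⟩
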